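/- Let U and V be finite-dimensional real inner product spaces, let c be an orthonormal basis of U and b any basis of V (both indexed by finite types), and let P be the Gram matrix P_{ij} = ⟪b_i, b_j⟫. Then P is invertible, and for every linear map T : U → V, the matrix of T with respect to the bases c and b equals P⁻¹ · Aᵀ, where A is the matrix of the adjoint T† : V → U with respect to the bases b and c. (This is the key computation in the paper's proposition on the matrix representation of a persistent sheaf Laplacian, with T the map ð_q^{t,p} into the space 𝔹 with basis {v₁, …, vₙ}.) -/

import Mathlib

/-!
Entrywise, `(P [T])ᵢⱼ = ⟪bᵢ, T cⱼ⟫ = ⟪T† bᵢ, cⱼ⟫`, and since `c` is orthonormal the last inner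
product is the `(j, i)` entry of `[T†]`; so `P [T] = [T†]ᵀ`. The Gram matrix `P` of the linearly
independent family `b` is positive definite, hence invertible.
-/

open Matrix RealInnerProductSpace

section

variable {𝕜 V : Type*} [RCLike 𝕜] {κ : Type*} [Fintype κ]

theorem Module.Basis.gram_mulVec_repr [SeminormedAddCommGroup V] [InnerProductSpace 𝕜 V]
    (b : Module.Basis κ 𝕜 V) (v : V) :
    gram 𝕜 b *ᵥ b.repr v = fun i => inner 𝕜 (b i) v := by
  ext i
  conv_rhs => rw [← b.sum_repr v, inner_sum]
  simp only [mulVec, dotProduct, gram_apply, inner_smul_right, mul_comm]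

theorem gram_mul_toMatrix_eq_conjTranspose_toMatrix_adjoint {U : Type*}
    [NormedAddCommGroup U] [InnerProductSpace 𝕜 U] [FiniteDimensional 𝕜 U]
    [NormedAddCommGroup V] [InnerProductSpace 𝕜 V] [FiniteDimensional 𝕜 V]
    {ι : Type*} [Fintype ι] [DecidableEq ι] [DecidableEq κ]
    (c : OrthonormalBasis ι 𝕜 U) (b : Module.Basis κ 𝕜 V) (T : U →ₗ[𝕜] V) :
    gram 𝕜 b * LinearMap.toMatrix c.toBasis b T =
      (LinearMap.toMatrix b c.toBasis (LinearMap.adjoint T))ᴴ := by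
  ext i j
  calc (gram 𝕜 b * LinearMap.toMatrix c.toBasis b T) i j
      = (gram 𝕜 b *ᵥ b.repr (T (c j))) i := by
        simp only [mul_apply, mulVec, dotProduct, LinearMap.toMatrix_apply, c.coe_toBasis]
    _ = inner 𝕜 (b i) (T (c j)) := by rw [b.gram_mulVec_repr]
    _ = inner 𝕜 (LinearMap.adjoint T (b i)) (c j) := (LinearMap.adjoint_inner_left T _ _).symm
    _ = _ := by simp [LinearMap.toMatrix_apply, c.repr_apply_apply]

end

/-- if `c` is an orthonormal basis of `U` and `b` any basis of `V` with
Gram matrix `P`, then `P` is invertible and for every linear map `T : U → V` the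
matrix of `T` (w.r.t. `c`, `b`) equals `P⁻¹ Aᵀ`, where `A` is the matrix of the
adjoint `T†` (w.r.t. `b`, `c`). -/
theorem toMatrix_eq_inv_gram_mul_transpose {U V : Type*}
    [NormedAddCommGroup U] [InnerProductSpace ℝ U] [FiniteDimensional ℝ U]
    [NormedAddCommGroup V] [InnerProductSpace ℝ V] [FiniteDimensional ℝ V]
    {ι κ : Type*} [Fintype ι] [Fintype κ] [DecidableEq ι] [DecidableEq κ]
    (c : OrthonormalBasis ι ℝ U) (b : Module.Basis κ ℝ V)
    (P : Matrix κ κ ℝ) (hP : ∀ i j, P i j = ⟪b i, b j⟫) :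
    IsUnit P ∧
      ∀ T : U →ₗ[ℝ] V,
        LinearMap.toMatrix c.toBasis b T =
          P⁻¹ * (LinearMap.toMatrix b c.toBasis (LinearMap.adjoint T))ᵀ := by
  have hP_gram : P = gram ℝ b := Matrix.ext hP
  have hP_unit : IsUnit P :=
    hP_gram ▸ (posDef_gram_of_linearIndependent b.linearIndependent).isUnit
  refine ⟨hP_unit, fun T => ?_⟩
  rw [← conjTranspose_eq_transpose_of_trivial,
    ← gram_mul_toMatrix_eq_conjTranspose_toMatrix_adjoint, ← hP_gram,
    nonsing_inv_mul_cancel_left _ _ ((isUnit_iff_isUnit_det P).mp hP_unit)]
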